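/- arXiv:1511.08751 — 2 statements merged into one kernel-verified Lean document; each statement's English description precedes it below -/
import Mathlib

section
/- Let (V, J, R) be an algebraic Kähler model of real dimension 2m with m ≥ 3 satisfying the XY-condition. Then for all vectors X, Y, Z ∈ V such that X, JX, Y, JY, Z, JZ are orthonormal, one has ⟨R(Y,JZ)X,JZ⟩ = ⟨R(Y,Z)X,Z⟩. -/
open RealInnerProductSpace Module

/-- An algebraic curvature tensor on a real inner product space `V`. -/
structure CurvatureTensor (V : Type*) [NormedAddCommGroup V] [InnerProductSpace ℝ V] where
  R : V → V → V → V
  lin₁ : ∀ Y Z, IsLinearMap ℝ fun X => R X Y Z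
  lin₂ : ∀ X Z, IsLinearMap ℝ fun Y => R X Y Z
  lin₃ : ∀ X Y, IsLinearMap ℝ fun Z => R X Y Z
  antisymm₁ : ∀ X Y Z W, ⟪R X Y Z, W⟫ = -⟪R Y X Z, W⟫
  antisymm₂ : ∀ X Y Z W, ⟪R X Y Z, W⟫ = -⟪R X Y W, Z⟫
  pair_symm : ∀ X Y Z W, ⟪R X Y Z, W⟫ = ⟪R Z W X, Y⟫
  bianchi : ∀ X Y Z, R X Y Z + R Y Z X + R Z X Y = 0

/-- An algebraic Kähler model: an algebraic curvature tensor together with a compatible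
orthogonal complex structure `J`. -/
structure KahlerModel (V : Type*) [NormedAddCommGroup V] [InnerProductSpace ℝ V]
    extends CurvatureTensor V where
  J : V →ₗ[ℝ] V
  J_isometry : ∀ X Y, ⟪J X, J Y⟫ = ⟪X, Y⟫
  J_sq : ∀ X, J (J X) = -X
  R_J_invariant : ∀ X Y Z, R (J X) (J Y) Z = R X Y Z
  R_J_commute : ∀ X Y Z, R X Y (J Z) = J (R X Y Z)

/-- The XY-condition: `⟪R(X,JX)Y, JX⟫ = ⟪R(Y,JY)X, JY⟫` whenever `X, JX, Y, JY`
are orthonormal. -/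
def KahlerModel.XYCond {V : Type*} [NormedAddCommGroup V] [InnerProductSpace ℝ V]
    (T : KahlerModel V) : Prop :=
  ∀ X Y : V, Orthonormal ℝ ![X, T.J X, Y, T.J Y] →
    ⟪T.R X (T.J X) Y, T.J X⟫ = ⟪T.R Y (T.J Y) X, T.J Y⟫

/-!
Fix a unit vector `X`. By homogeneity, the XY-condition says that the cubic form
`C(W) = ⟪R(W,JW)X, JW⟫` equals `‖W‖² L(W)`, with `L(W) = ⟪R(X,JX)W, JX⟫` linear, for every `W`
orthogonal to `X` and `JX`. For a unit vector `U` orthogonal to `Y` (and to `X, JX`),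
`‖Y ± U‖² = 2`, and since `R(A,JB) = R(B,JA)` the even part of `C(Y + U)` is
`C(Y) + ⟪R(U,JU)X, JY⟫ + 2⟪R(Y,JU)X, JU⟫`; comparing with `2 L(Y ± U)` gives
`⟪R(U,JU)X, JY⟫ + 2⟪R(Y,JU)X, JU⟫ = L(Y)`. For `U = Z` and `U = JZ` the first terms agree, and the
second ones are the two sides of the claim.
-/

namespace KahlerModel

variable {V : Type*} [NormedAddCommGroup V] [InnerProductSpace ℝ V] (T : KahlerModel V)

lemma R_add₁ (A B C D : V) : T.R (A + B) C D = T.R A C D + T.R B C D := (T.lin₁ C D).map_add A B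
lemma R_sub₁ (A B C D : V) : T.R (A - B) C D = T.R A C D - T.R B C D := (T.lin₁ C D).map_sub A B
lemma R_smul₁ (a : ℝ) (A C D : V) : T.R (a • A) C D = a • T.R A C D := (T.lin₁ C D).map_smul a A
lemma R_add₂ (A B C D : V) : T.R C (A + B) D = T.R C A D + T.R C B D := (T.lin₂ C D).map_add A B
lemma R_sub₂ (A B C D : V) : T.R C (A - B) D = T.R C A D - T.R C B D := (T.lin₂ C D).map_sub A B
lemma R_neg₂ (A C D : V) : T.R C (-A) D = -T.R C A D := (T.lin₂ C D).map_neg A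
lemma R_smul₂ (a : ℝ) (A C D : V) : T.R C (a • A) D = a • T.R C A D := (T.lin₂ C D).map_smul a A
lemma R_add₃ (A B C D : V) : T.R C D (A + B) = T.R C D A + T.R C D B := (T.lin₃ C D).map_add A B
lemma R_sub₃ (A B C D : V) : T.R C D (A - B) = T.R C D A - T.R C D B := (T.lin₃ C D).map_sub A B
lemma R_smul₃ (a : ℝ) (A C D : V) : T.R C D (a • A) = a • T.R C D A := (T.lin₃ C D).map_smul a A

lemma R_swap (A B C : V) : T.R B A C = -T.R A B C :=
  ext_inner_right ℝ fun W => by rw [inner_neg_left, T.antisymm₁]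

lemma R_J_symm (A B C : V) : T.R A (T.J B) C = T.R B (T.J A) C := by
  rw [← T.R_J_invariant A, T.J_sq, R_neg₂, R_swap, neg_neg]

lemma inner_J_left (A B : V) : ⟪T.J A, B⟫ = -⟪A, T.J B⟫ := by
  rw [← T.J_isometry A (T.J B), T.J_sq, inner_neg_right, neg_neg]

lemma inner_J_self (A : V) : ⟪A, T.J A⟫ = 0 := by
  have h := T.inner_J_left A A
  rw [real_inner_comm] at h
  linarith

lemma norm_J (A : V) : ‖T.J A‖ = ‖A‖ := by
  rw [norm_eq_sqrt_real_inner, T.J_isometry, ← norm_eq_sqrt_real_inner]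

lemma orthonormal_J_pair {X W : V} (hX : ‖X‖ = 1) (hW : ‖W‖ = 1) (hXW : ⟪X, W⟫ = 0)
    (hXJW : ⟪X, T.J W⟫ = 0) : Orthonormal ℝ ![X, T.J X, W, T.J W] := by
  have hJXW : ⟪T.J X, W⟫ = 0 := by rw [inner_J_left, hXJW, neg_zero]
  have hJXJW : ⟪T.J X, T.J W⟫ = 0 := by rw [J_isometry, hXW]
  refine ⟨fun i => ?_, fun i j hij => ?_⟩
  · fin_cases i <;> simp [norm_J, hX, hW]
  · fin_cases i <;> fin_cases j <;>
      simp_all [real_inner_comm, inner_J_self]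

def cubic (X W : V) : ℝ := ⟪T.R W (T.J W) X, T.J W⟫

lemma cubic_smul (a : ℝ) (X W : V) : T.cubic X (a • W) = a ^ 3 * T.cubic X W := by
  simp only [cubic, map_smul, R_smul₁, R_smul₂, real_inner_smul_left, real_inner_smul_right]
  ring

lemma cubic_add_add_cubic_sub (X A B : V) :
    T.cubic X (A + B) + T.cubic X (A - B) =
      2 * T.cubic X A + 2 * ⟪T.R B (T.J B) X, T.J A⟫ + 4 * ⟪T.R A (T.J B) X, T.J B⟫ := by
  simp only [cubic, map_add, map_sub, R_add₁, R_sub₁, R_add₂, R_sub₂, inner_add_left,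
    inner_add_right, inner_sub_left, inner_sub_right, T.R_J_symm B A]
  ring

variable {T}

lemma XYCond.cubic_eq_norm_sq_mul (hxy : T.XYCond) {X W : V} (hX : ‖X‖ = 1)
    (hXW : ⟪X, W⟫ = 0) (hXJW : ⟪X, T.J W⟫ = 0) :
    T.cubic X W = ‖W‖ ^ 2 * ⟪T.R X (T.J X) W, T.J X⟫ := by
  rcases eq_or_ne W 0 with rfl | hW
  · simpa using T.cubic_smul 0 X 0
  have hr : ‖W‖ ≠ 0 := norm_ne_zero_iff.mpr hW
  have hu := T.orthonormal_J_pair (W := ‖W‖⁻¹ • W) hX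
    (by rw [norm_smul, norm_inv, norm_norm, inv_mul_cancel₀ hr])
    (by rw [inner_smul_right, hXW, mul_zero])
    (by rw [map_smul, inner_smul_right, hXJW, mul_zero])
  have hWu : W = ‖W‖ • (‖W‖⁻¹ • W) := by rw [smul_smul, mul_inv_cancel₀ hr, one_smul]
  conv_lhs => rw [hWu, cubic_smul, cubic, ← hxy X _ hu, R_smul₃, real_inner_smul_left]
  field_simp

lemma XYCond.inner_R_add_two_mul_inner_R (hxy : T.XYCond) {X Y U : V} (hX : ‖X‖ = 1)
    (hY : ‖Y‖ = 1) (hU : ‖U‖ = 1) (hYU : ⟪Y, U⟫ = 0) (hXY : ⟪X, Y⟫ = 0) (hXJY : ⟪X, T.J Y⟫ = 0)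
    (hXU : ⟪X, U⟫ = 0) (hXJU : ⟪X, T.J U⟫ = 0) :
    ⟪T.R U (T.J U) X, T.J Y⟫ + 2 * ⟪T.R Y (T.J U) X, T.J U⟫ = ⟪T.R X (T.J X) Y, T.J X⟫ := by
  have hcubicY := hxy.cubic_eq_norm_sq_mul hX hXY hXJY
  have hYU_add := hxy.cubic_eq_norm_sq_mul (W := Y + U) hX
    (by rw [inner_add_right, hXY, hXU, add_zero])
    (by rw [map_add, inner_add_right, hXJY, hXJU, add_zero])
  have hYU_sub := hxy.cubic_eq_norm_sq_mul (W := Y - U) hX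
    (by rw [inner_sub_right, hXY, hXU, sub_zero])
    (by rw [map_sub, inner_sub_right, hXJY, hXJU, sub_zero])
  have := T.cubic_add_add_cubic_sub X Y U
  rw [hcubicY, hYU_add, hYU_sub, norm_add_sq_real, norm_sub_sq_real, hYU, hY, hU, R_add₃, R_sub₃,
    inner_add_left, inner_sub_left] at this
  linarith

end KahlerModel

theorem ZZ_JZJZ_property_general {V : Type*} [NormedAddCommGroup V] [InnerProductSpace ℝ V]
    (T : KahlerModel V)
    (hxy : T.XYCond)
    (X Y Z : V) (h : Orthonormal ℝ ![X, T.J X, Y, T.J Y, Z, T.J Z]) :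
    ⟪T.R Y (T.J Z) X, T.J Z⟫ = ⟪T.R Y Z X, Z⟫ := by
  have hX : ‖X‖ = 1 := by simpa using h.1 0
  have hY : ‖Y‖ = 1 := by simpa using h.1 2
  have hZ : ‖Z‖ = 1 := by simpa using h.1 4
  have hXY : ⟪X, Y⟫ = 0 := by simpa using h.2 (show (0 : Fin 6) ≠ 2 by decide)
  have hXJY : ⟪X, T.J Y⟫ = 0 := by simpa using h.2 (show (0 : Fin 6) ≠ 3 by decide)
  have hXZ : ⟪X, Z⟫ = 0 := by simpa using h.2 (show (0 : Fin 6) ≠ 4 by decide)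
  have hXJZ : ⟪X, T.J Z⟫ = 0 := by simpa using h.2 (show (0 : Fin 6) ≠ 5 by decide)
  have hYZ : ⟪Y, Z⟫ = 0 := by simpa using h.2 (show (2 : Fin 6) ≠ 4 by decide)
  have hYJZ : ⟪Y, T.J Z⟫ = 0 := by simpa using h.2 (show (2 : Fin 6) ≠ 5 by decide)
  have hXJJZ : ⟪X, T.J (T.J Z)⟫ = 0 := by rw [T.J_sq, inner_neg_right, hXZ, neg_zero]
  have along_Z := hxy.inner_R_add_two_mul_inner_R hX hY hZ hYZ hXY hXJY hXZ hXJZ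
  have along_JZ :=
    hxy.inner_R_add_two_mul_inner_R hX hY (by rwa [T.norm_J]) hYJZ hXY hXJY hXJZ hXJJZ
  simp only [T.J_sq, T.R_neg₂, T.R_swap Z (T.J Z), inner_neg_left, inner_neg_right, neg_neg]
    at along_JZ
  linarith

theorem ZZ_JZJZ_property {V : Type*} [NormedAddCommGroup V] [InnerProductSpace ℝ V] [FiniteDimensional ℝ V]
    (T : KahlerModel V) (m : ℕ) (hm : 3 ≤ m) (hdim : finrank ℝ V = 2 * m)
    (hxy : T.XYCond)
    (X Y Z : V) (h : Orthonormal ℝ ![X, T.J X, Y, T.J Y, Z, T.J Z]) :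
    ⟪T.R Y (T.J Z) X, T.J Z⟫ = ⟪T.R Y Z X, Z⟫ :=
  ZZ_JZJZ_property_general T hxy X Y Z h
end

section
/- Let (V, J, R) be an algebraic Kähler model of real dimension 2m with m ≥ 2, and suppose ⟨R(X,JX)Y,JX⟩ = 0 for all vectors X, Y ∈ V such that X, JX, Y, JY are orthonormal (pointwise constant holomorphic sectional curvature). Then every totally real subspace W of V is very special for R: for all v, w ∈ W one has R(v, w) v ∈ W. -/
open RealInnerProductSpace Module

/-- A subspace `W` is totally real (antiholomorphic) if `J W` is orthogonal to `W`. -/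
def KahlerModel.IsTotallyReal {V : Type*} [NormedAddCommGroup V] [InnerProductSpace ℝ V]
    (T : KahlerModel V) (W : Submodule ℝ V) : Prop :=
  ∀ v ∈ W, ∀ u ∈ W, ⟪T.J v, u⟫ = 0

/-!
The hypothesis says, after rescaling, that `⟪R(X, JX)Y, JX⟫ = 0` whenever `Y ⊥ X, JX`. If `v, w`
lie in a totally real subspace we may replace `w` by its component orthogonal to `v`. Then
`R(v, w)v` is orthogonal to `Jv`, to `Jw` and to every `u ⊥ v, w, Jv, Jw`: each time by polarizing
the hypothesis at suitable points `X` of the complex span of `v, w` and using the Kähler symmetries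
of `R`. Hence `R(v, w)v ∈ span {v, w} ⊆ W`.
-/

open Submodule

instance Submodule.finiteDimensional_span_pair {K V : Type*} [DivisionRing K] [AddCommGroup V]
    [Module K V] (a b : V) : FiniteDimensional K (span K {a, b}) :=
  FiniteDimensional.span_of_finite K (Set.toFinite _)

lemma Submodule.mem_orthogonal_span_pair {𝕜 E : Type*} [RCLike 𝕜] [NormedAddCommGroup E]
    [InnerProductSpace 𝕜 E] {a b u : E} :
    u ∈ (span 𝕜 {a, b})ᗮ ↔ inner 𝕜 u a = 0 ∧ inner 𝕜 u b = 0 := by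
  rw [mem_orthogonal']
  refine ⟨fun h ↦ ⟨h a (subset_span (by simp)), h b (subset_span (by simp))⟩, ?_⟩
  rintro ⟨ha, hb⟩ v hv
  obtain ⟨x, y, rfl⟩ := mem_span_pair.mp hv
  simp [inner_add_right, inner_smul_right, ha, hb]

namespace KahlerModel

variable {V : Type*} [NormedAddCommGroup V] [InnerProductSpace ℝ V] (T : KahlerModel V)

def q (X Y Z W : V) : ℝ := ⟪T.R X Y Z, W⟫

def IsPointwiseConstantHolomorphic : Prop :=
  ∀ X Y : V, Orthonormal ℝ ![X, T.J X, Y, T.J Y] → ⟪T.R X (T.J X) Y, T.J X⟫ = 0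

section Multilinear

variable (X X' Y Y' Z Z' W W' : V) (c : ℝ)

@[simp] lemma q_add₁ : T.q (X + X') Y Z W = T.q X Y Z W + T.q X' Y Z W := by
  simp only [q, (T.lin₁ Y Z).map_add, inner_add_left]

@[simp] lemma q_add₂ : T.q X (Y + Y') Z W = T.q X Y Z W + T.q X Y' Z W := by
  simp only [q, (T.lin₂ X Z).map_add, inner_add_left]

@[simp] lemma q_add₃ : T.q X Y (Z + Z') W = T.q X Y Z W + T.q X Y Z' W := by
  simp only [q, (T.lin₃ X Y).map_add, inner_add_left]

@[simp] lemma q_add₄ : T.q X Y Z (W + W') = T.q X Y Z W + T.q X Y Z W' :=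
  inner_add_right _ _ _

@[simp] lemma q_smul₁ : T.q (c • X) Y Z W = c * T.q X Y Z W := by
  simp only [q, (T.lin₁ Y Z).map_smul, real_inner_smul_left]

@[simp] lemma q_smul₂ : T.q X (c • Y) Z W = c * T.q X Y Z W := by
  simp only [q, (T.lin₂ X Z).map_smul, real_inner_smul_left]

@[simp] lemma q_smul₃ : T.q X Y (c • Z) W = c * T.q X Y Z W := by
  simp only [q, (T.lin₃ X Y).map_smul, real_inner_smul_left]

@[simp] lemma q_smul₄ : T.q X Y Z (c • W) = c * T.q X Y Z W :=
  real_inner_smul_right _ _ _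

@[simp] lemma q_neg₁ : T.q (-X) Y Z W = -T.q X Y Z W := by
  simpa using T.q_smul₁ X Y Z W (-1)

@[simp] lemma q_neg₂ : T.q X (-Y) Z W = -T.q X Y Z W := by
  simpa using T.q_smul₂ X Y Z W (-1)

@[simp] lemma q_neg₄ : T.q X Y Z (-W) = -T.q X Y Z W := by
  simpa using T.q_smul₄ X Y Z W (-1)

@[simp] lemma q_sub₁ : T.q (X - X') Y Z W = T.q X Y Z W - T.q X' Y Z W := by
  simp [sub_eq_add_neg]

@[simp] lemma q_sub₂ : T.q X (Y - Y') Z W = T.q X Y Z W - T.q X Y' Z W := by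
  simp [sub_eq_add_neg]

@[simp] lemma q_sub₄ : T.q X Y Z (W - W') = T.q X Y Z W - T.q X Y Z W' := by
  simp [sub_eq_add_neg]

@[simp] lemma q_zero₃ : T.q X Y 0 W = 0 := by simpa using T.q_smul₃ X Y 0 W 0

end Multilinear

section Symmetries

variable (X Y Z W : V)

lemma q_antisymm₁ : T.q X Y Z W = -T.q Y X Z W := T.antisymm₁ X Y Z W

lemma q_antisymm₂ : T.q X Y Z W = -T.q X Y W Z := T.antisymm₂ X Y Z W

lemma q_pair_symm : T.q X Y Z W = T.q Z W X Y := T.pair_symm X Y Z W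

@[simp] lemma q_self₁ : T.q X X Z W = 0 := by linarith [T.q_antisymm₁ X X Z W]

@[simp] lemma q_self₂ : T.q X Y Z Z = 0 := by linarith [T.q_antisymm₂ X Y Z Z]

lemma q_bianchi : T.q X Y Z W + T.q Y Z X W + T.q Z X Y W = 0 := by
  simpa only [q, inner_add_left, inner_zero_left] using congrArg (⟪·, W⟫) (T.bianchi X Y Z)

@[simp] lemma q_J_J₁ : T.q (T.J X) (T.J Y) Z W = T.q X Y Z W := by
  rw [q, T.R_J_invariant, q]

@[simp] lemma q_J_J₃ : T.q X Y (T.J Z) (T.J W) = T.q X Y Z W := by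
  rw [q, T.R_J_commute, T.J_isometry, q]

lemma q_J₂ : T.q X (T.J Y) Z W = T.q Y (T.J X) Z W := by
  simpa [T.J_sq, ← T.q_antisymm₁] using (T.q_J_J₁ X (T.J Y) Z W).symm

@[simp] lemma inner_J_self_s18 : ⟪T.J X, X⟫ = 0 := by
  have h := T.J_isometry (T.J X) X
  rw [T.J_sq, inner_neg_left, real_inner_comm] at h
  linarith

@[simp] lemma inner_self_J : ⟪X, T.J X⟫ = 0 := by
  rw [real_inner_comm]; exact T.inner_J_self_s18 X

@[simp] lemma norm_J_s18 : ‖T.J X‖ = ‖X‖ := by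
  rw [norm_eq_sqrt_real_inner, T.J_isometry, norm_eq_sqrt_real_inner]

lemma inner_J_left_s18 : ⟪T.J X, Y⟫ = -⟪X, T.J Y⟫ := by
  have h := T.J_isometry X (T.J Y)
  rw [T.J_sq, inner_neg_right] at h
  linarith

lemma R_self₁ : T.R X X Z = 0 :=
  ext_inner_right ℝ fun W ↦ by rw [inner_zero_left]; exact T.q_self₁ X Z W

end Symmetries

lemma orthonormal_J {X Y : V} (hX : ‖X‖ = 1) (hY : ‖Y‖ = 1) (hYX : ⟪Y, X⟫ = 0)
    (hYJX : ⟪Y, T.J X⟫ = 0) : Orthonormal ℝ ![X, T.J X, Y, T.J Y] := by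
  have hJYX : ⟪T.J Y, X⟫ = 0 := by rw [inner_J_left_s18, hYJX, neg_zero]
  rw [orthonormal_iff_ite]
  intro i j
  fin_cases i <;> fin_cases j <;>
    simp [T.J_isometry, hX, hY, hYX, hYJX, hJYX,
      inner_eq_zero_symm.mp hYX, inner_eq_zero_symm.mp hYJX, inner_eq_zero_symm.mp hJYX]

lemma q_J_add_sub_q_J_sub (X Y u : V) :
    T.q (X + Y) (T.J (X + Y)) u (T.J (X + Y)) - T.q (X - Y) (T.J (X - Y)) u (T.J (X - Y)) =
      2 * (T.q Y (T.J Y) u (T.J Y) + 2 * T.q Y (T.J X) u (T.J X) + T.q X (T.J X) u (T.J Y)) := by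
  simp only [map_add, map_sub, q_add₁, q_add₂, q_add₄, q_sub₁, q_sub₂, q_sub₄]
  rw [T.q_J₂ X Y]
  ring

lemma q_J_add_J (e f Z W : V) :
    T.q (e + T.J f) (T.J (e + T.J f)) Z W =
      T.q e (T.J e) Z W - 2 * T.q e f Z W + T.q f (T.J f) Z W := by
  simp only [map_add, T.J_sq, q_add₁, q_add₂, q_neg₂, q_J_J₁]
  rw [T.q_antisymm₁ f e, T.q_antisymm₁ (T.J f) f]
  ring

namespace IsPointwiseConstantHolomorphic

variable {T}

lemma q_J_eq_zero (hT : T.IsPointwiseConstantHolomorphic) {X Y : V} (hYX : ⟪Y, X⟫ = 0)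
    (hYJX : ⟪Y, T.J X⟫ = 0) : T.q X (T.J X) Y (T.J X) = 0 := by
  rcases eq_or_ne X 0 with rfl | hX
  · simp
  rcases eq_or_ne Y 0 with rfl | hY
  · simp
  set a := ‖X‖⁻¹
  set b := ‖Y‖⁻¹
  have h := hT (a • X) (b • Y) <| T.orthonormal_J (norm_smul_inv_norm hX) (norm_smul_inv_norm hY)
    (by simp [real_inner_smul_left, real_inner_smul_right, hYX])
    (by simp [real_inner_smul_left, real_inner_smul_right, hYJX])
  change T.q _ _ _ _ = 0 at h
  simpa [a, b, hX, hY] using h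

lemma q_self_eq_zero (hT : T.IsPointwiseConstantHolomorphic) {X Y : V} (hYX : ⟪Y, X⟫ = 0)
    (hYJX : ⟪Y, T.J X⟫ = 0) : T.q X (T.J X) Y X = 0 := by
  have h := hT.q_J_eq_zero (X := X) (Y := T.J Y) (by rw [inner_J_left_s18, hYJX, neg_zero])
    (by rw [T.J_isometry, hYX])
  simpa [T.J_sq] using h

lemma polarized_eq_zero (hT : T.IsPointwiseConstantHolomorphic) {X Y u : V}
    (huX : ⟪u, X⟫ = 0) (huJX : ⟪u, T.J X⟫ = 0) (huY : ⟪u, Y⟫ = 0) (huJY : ⟪u, T.J Y⟫ = 0) :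
    2 * T.q Y (T.J X) u (T.J X) + T.q X (T.J X) u (T.J Y) = 0 := by
  have h := T.q_J_add_sub_q_J_sub X Y u
  rw [hT.q_J_eq_zero (by rw [inner_add_right, huX, huY, add_zero])
      (by rw [map_add, inner_add_right, huJX, huJY, add_zero]),
    hT.q_J_eq_zero (by rw [inner_sub_right, huX, huY, sub_zero])
      (by rw [map_sub, inner_sub_right, huJX, huJY, sub_zero]),
    hT.q_J_eq_zero huY huJY] at h
  linarith

variable {e f : V}

lemma q_J_fst_eq_zero (hT : T.IsPointwiseConstantHolomorphic) (hfe : ⟪f, e⟫ = 0)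
    (hfJe : ⟪f, T.J e⟫ = 0) : T.q e f e (T.J e) = 0 := by
  rw [q_pair_symm, q_antisymm₂, hT.q_self_eq_zero hfe hfJe, neg_zero]

lemma q_of_orthogonal_eq_zero (hT : T.IsPointwiseConstantHolomorphic) {u : V}
    (hue : ⟪u, e⟫ = 0) (huf : ⟪u, f⟫ = 0) (huJe : ⟪u, T.J e⟫ = 0) (huJf : ⟪u, T.J f⟫ = 0) :
    T.q e f e u = 0 := by
  -- polarize at `(e, f)` and at `(Je, f)`; Bianchi for `(e, Je, u)` then closes a linear system
  have S₁ := hT.polarized_eq_zero hue huJe huf huJf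
  have S₂ := hT.polarized_eq_zero huJe (by rw [T.J_sq, inner_neg_right, hue, neg_zero]) huf huJf
  simp only [T.J_sq, q_neg₂, q_neg₄] at S₂
  have B := T.q_bianchi e (T.J e) u (T.J f)
  rw [T.q_pair_symm (T.J e) u, T.q_J₂ e f, T.q_antisymm₂ f (T.J e) (T.J e), T.q_pair_symm u,
    q_J_J₁] at B
  rw [T.q_antisymm₁ f, T.q_antisymm₁ (T.J e)] at S₂
  rw [q_antisymm₂]
  linarith

lemma q_J_snd_eq_zero (hT : T.IsPointwiseConstantHolomorphic) (hfe : ⟪f, e⟫ = 0)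
    (hfJe : ⟪f, T.J e⟫ = 0) : T.q e f e (T.J f) = 0 := by
  rcases eq_or_ne e 0 with rfl | he
  · simp
  have hef : ⟪e, f⟫ = 0 := inner_eq_zero_symm.mp hfe
  have hJef : ⟪T.J e, f⟫ = 0 := inner_eq_zero_symm.mp hfJe
  -- the weights of `Y` make it orthogonal to `JX = Je - f`
  have E := hT.q_J_eq_zero (X := e + T.J f) (Y := ‖f‖ ^ 2 • T.J e + ‖e‖ ^ 2 • f)
    (by simp [inner_add_left, inner_add_right, real_inner_smul_left, hfe, hef, T.J_isometry])
    (by simp [inner_add_left, inner_add_right, real_inner_smul_left, hfJe, hJef, T.J_sq]; ring)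
  rw [q_J_add_J] at E
  simp only [map_add, T.J_sq, q_add₃, q_add₄, q_smul₃, q_neg₄, q_self₂] at E
  have h1 : T.q e (T.J e) f (T.J e) = 0 := hT.q_J_eq_zero hfe hfJe
  have h2 : T.q f (T.J f) (T.J e) f = 0 :=
    hT.q_self_eq_zero hJef (by rw [T.J_isometry, hef])
  rw [T.q_antisymm₂ e (T.J e) (T.J e) f, T.q_antisymm₂ f (T.J f) f (T.J e),
    T.q_antisymm₂ e f (T.J e) f, h1, h2] at E
  have key : (‖e‖ ^ 2 + ‖f‖ ^ 2) * T.q e f f (T.J e) = 0 := by linear_combination -E / 2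
  have hpos : ‖e‖ ^ 2 + ‖f‖ ^ 2 ≠ 0 := by positivity
  rw [← q_J_J₃, T.J_sq, q_neg₄, ← q_antisymm₂]
  exact (mul_eq_zero.mp key).resolve_left hpos

lemma R_mem_span_of_orthogonal (hT : T.IsPointwiseConstantHolomorphic) (hfe : ⟪f, e⟫ = 0)
    (hfJe : ⟪f, T.J e⟫ = 0) : T.R e f e ∈ span ℝ {e, f} := by
  set K := span ℝ {e, f}
  set L := span ℝ {T.J e, T.J f}
  have hRL : T.R e f e ∈ Lᗮ :=
    mem_orthogonal_span_pair.mpr ⟨hT.q_J_fst_eq_zero hfe hfJe, hT.q_J_snd_eq_zero hfe hfJe⟩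
  have hLK : L ≤ Kᗮ := by
    refine span_le.mpr (Set.insert_subset_iff.mpr ⟨?_, Set.singleton_subset_iff.mpr ?_⟩)
    · exact mem_orthogonal_span_pair.mpr ⟨T.inner_J_self_s18 e, inner_eq_zero_symm.mp hfJe⟩
    · exact mem_orthogonal_span_pair.mpr
        ⟨by rw [inner_J_left_s18, hfJe, neg_zero], T.inner_J_self_s18 f⟩
  rw [← K.orthogonal_orthogonal, mem_orthogonal']
  intro u hu
  obtain ⟨hue, huf⟩ :=
    mem_orthogonal_span_pair.mp (sub_mem hu (hLK (L.starProjection_apply_mem u)))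
  obtain ⟨huJe, huJf⟩ := mem_orthogonal_span_pair.mp (L.sub_starProjection_mem_orthogonal u)
  calc ⟪T.R e f e, u⟫
      = ⟪T.R e f e, L.starProjection u⟫ + ⟪T.R e f e, u - L.starProjection u⟫ := by
        rw [← inner_add_right, add_sub_cancel]
    _ = 0 := by
        rw [inner_left_of_mem_orthogonal (L.starProjection_apply_mem u) hRL, zero_add]
        exact hT.q_of_orthogonal_eq_zero hue huf huJe huJf

lemma R_mem_span (hT : T.IsPointwiseConstantHolomorphic) (hJef : ⟪T.J e, f⟫ = 0) :
    T.R e f e ∈ span ℝ {e, f} := by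
  obtain ⟨c, hc⟩ := mem_span_singleton.mp ((ℝ ∙ e).starProjection_apply_mem f)
  have hfe : ⟪f - c • e, e⟫ = 0 := by
    rw [hc]
    exact mem_orthogonal_singleton_iff_inner_left.mp ((ℝ ∙ e).sub_starProjection_mem_orthogonal f)
  have hfJe : ⟪f - c • e, T.J e⟫ = 0 := by
    rw [inner_sub_left, real_inner_smul_left, inner_eq_zero_symm.mp hJef, inner_self_J, mul_zero,
      sub_zero]
  have hR : T.R e (f - c • e) e = T.R e f e := by
    rw [(T.lin₂ e e).map_sub, (T.lin₂ e e).map_smul, R_self₁, smul_zero, sub_zero]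
  have hle : span ℝ {e, f - c • e} ≤ span ℝ {e, f} :=
    span_le.mpr (Set.pair_subset (subset_span (by simp))
      (sub_mem (subset_span (by simp)) (smul_mem _ c (subset_span (by simp)))))
  exact hR ▸ hle (hT.R_mem_span_of_orthogonal hfe hfJe)

end IsPointwiseConstantHolomorphic

end KahlerModel

theorem totally_real_subspace_verySpecial_of_constant_holomorphic_general {V : Type*} [NormedAddCommGroup V] [InnerProductSpace ℝ V]
    (T : KahlerModel V)
    (hconst : ∀ X Y : V, Orthonormal ℝ ![X, T.J X, Y, T.J Y] →
      ⟪T.R X (T.J X) Y, T.J X⟫ = 0)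
    (W : Submodule ℝ V) (hTR : T.IsTotallyReal W)
    (v w : V) (hv : v ∈ W) (hw : w ∈ W) :
    T.R v w v ∈ W :=
  span_le.mpr (Set.pair_subset hv hw)
    (KahlerModel.IsPointwiseConstantHolomorphic.R_mem_span hconst (hTR v hv w hw))

theorem totally_real_subspace_verySpecial_of_constant_holomorphic {V : Type*} [NormedAddCommGroup V] [InnerProductSpace ℝ V] [FiniteDimensional ℝ V]
    (T : KahlerModel V) (m : ℕ) (hm : 2 ≤ m) (hdim : finrank ℝ V = 2 * m)
    (hconst : ∀ X Y : V, Orthonormal ℝ ![X, T.J X, Y, T.J Y] →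
      ⟪T.R X (T.J X) Y, T.J X⟫ = 0)
    (W : Submodule ℝ V) (hTR : T.IsTotallyReal W)
    (v w : V) (hv : v ∈ W) (hw : w ∈ W) :
    T.R v w v ∈ W :=
  totally_real_subspace_verySpecial_of_constant_holomorphic_general T hconst W hTR v w hv hw
end
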